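/- Let X₁ⁿ be any n-letter input to the multicast discrete memoryless channel with outputs Y(ℓ)₁ⁿ, and let X* be a single-letter input whose distribution is the average of the marginals, p_{X*} = (1/n)·Σ_{i=1}^n p_{X_i}, with corresponding single-letter outputs Y*(ℓ). Then: (i) for every receiver ℓ, E[b_ℓ(Y*(ℓ))] = (1/n)·E[b_ℓ(Y(ℓ)₁ⁿ)], so if X₁ⁿ is B⃗-admissible then X* satisfies the single-letter energy constraints E[b_ℓ(Y*(ℓ))] ≥ B_ℓ; and (ii) min_{ℓ∈Θ} I(X₁ⁿ; Y(ℓ)₁ⁿ) ≤ n·min_{ℓ∈Θ} I(X*; Y*(ℓ)). -/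

import Mathlib

open scoped BigOperators

noncomputable section

/-- A probability vector on a finite alphabet. -/
def IsProbVec {α : Type} [Fintype α] (p : α → ℝ) : Prop :=
  (∀ a, 0 ≤ p a) ∧ (∑ a, p a) = 1

/-- A (row-stochastic) discrete channel. -/
def IsChannel {α β : Type} [Fintype β] (W : α → β → ℝ) : Prop :=
  ∀ x, (∀ y, 0 ≤ W x y) ∧ (∑ y, W x y) = 1

/-- The memoryless `n`-letter extension of a channel. -/
def nCh {α β : Type} (W : α → β → ℝ) (n : ℕ) (x : Fin n → α) (y : Fin n → β) : ℝ :=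
  ∏ i, W (x i) (y i)

/-- Output distribution induced by input distribution `p` through channel `W`. -/
def outDist {α β : Type} [Fintype α] (p : α → ℝ) (W : α → β → ℝ) (y : β) : ℝ :=
  ∑ x, p x * W x y

/-- Expected value `E[b(Y)]` of an energy function `b` at the channel output. -/
def outEnergy {α β : Type} [Fintype α] [Fintype β] (p : α → ℝ) (W : α → β → ℝ)
    (b : β → ℝ) : ℝ :=
  ∑ y, outDist p W y * b y

/-- Additive block extension of an energy function. -/
def blockE {β : Type} (b : β → ℝ) {n : ℕ} (y : Fin n → β) : ℝ := ∑ i, b (y i)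

/-- Mutual information `I(X;Y)` between the input `X ~ p` and the output of channel `W`. -/
def mutInfo {α β : Type} [Fintype α] [Fintype β] (p : α → ℝ) (W : α → β → ℝ) : ℝ :=
  ∑ x, ∑ y, p x * W x y * Real.log (W x y / outDist p W y)

/-- The `n`-th multicast capacity-energy function with energy constraint vector `B`. -/
def CnVec {𝓧 : Type} [Fintype 𝓧] {L : ℕ} {𝓨 : Fin L → Type} [∀ ℓ, Fintype (𝓨 ℓ)]
    (W : ∀ ℓ, 𝓧 → 𝓨 ℓ → ℝ) (b : ∀ ℓ, 𝓨 ℓ → ℝ) (B : Fin L → ℝ) (n : ℕ) : ℝ :=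
  sSup { r | ∃ p : (Fin n → 𝓧) → ℝ, IsProbVec p ∧
      (∀ ℓ, (n : ℝ) * B ℓ ≤ outEnergy p (nCh (W ℓ) n) (blockE (b ℓ))) ∧
      r = ⨅ ℓ, mutInfo p (nCh (W ℓ) n) }

/-- The multicast capacity-energy function `C(B⃗) = sup_n C_n(B⃗)/n`. -/
def CcapVec {𝓧 : Type} [Fintype 𝓧] {L : ℕ} {𝓨 : Fin L → Type} [∀ ℓ, Fintype (𝓨 ℓ)]
    (W : ∀ ℓ, 𝓧 → 𝓨 ℓ → ℝ) (b : ∀ ℓ, 𝓨 ℓ → ℝ) (B : Fin L → ℝ) : ℝ :=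
  ⨆ n : ℕ+, CnVec W b B n / (n : ℝ)

/-- Input distribution on `𝓧ⁿ` induced by a uniformly distributed message through encoder `f`. -/
def inducedDist {𝓧 : Type} [Fintype 𝓧] [DecidableEq 𝓧] {n M : ℕ}
    (f : Fin M → (Fin n → 𝓧)) (x : Fin n → 𝓧) : ℝ :=
  ((Finset.univ.filter (fun w => f w = x)).card : ℝ) / M

/-- Average error probability of the code `(f, g)` over channel `W`. -/
def errProb {𝓧 𝓨 : Type} [Fintype 𝓨] {n M : ℕ}
    (W : 𝓧 → 𝓨 → ℝ) (f : Fin M → (Fin n → 𝓧)) (g : (Fin n → 𝓨) → Fin M) : ℝ :=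
  (M : ℝ)⁻¹ * ∑ w, ∑ y, if g y = w then 0 else nCh W n (f w) y


/-- The `i`-th single-letter marginal of an `n`-letter input distribution. -/
def marg {𝓧 : Type} [Fintype 𝓧] [DecidableEq 𝓧] {n : ℕ}
    (p : (Fin n → 𝓧) → ℝ) (i : Fin n) (x : 𝓧) : ℝ :=
  ∑ xv : Fin n → 𝓧, if xv i = x then p xv else 0

/-- The averaged single-letter input `p_{X*} = (1/n) Σᵢ p_{Xᵢ}`. -/
def avgMarg {𝓧 : Type} [Fintype 𝓧] [DecidableEq 𝓧] {n : ℕ}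
    (p : (Fin n → 𝓧) → ℝ) (x : 𝓧) : ℝ :=
  (n : ℝ)⁻¹ * ∑ i, marg p i x

/-!
For a memoryless channel, the expected additive energy of the output and the single-letter
mutual informations `I(Xᵢ; Yᵢ)` depend on the input only through its marginals `p_{Xᵢ}`, whose
average is `p_{X*}`; this gives (i) by linearity. For (ii) it suffices to show, for each receiver,
`I(X₁ⁿ; Y₁ⁿ) ≤ Σᵢ I(Xᵢ; Yᵢ) ≤ n · I(X*; Y*)`. Both steps are instances of
`I(X; Y) ≤ E[D(W(·|X) ‖ q)]`, valid for every output distribution `q` by Gibbs' inequality: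
with `q = ∏ᵢ p_{Yᵢ}` for the first (memorylessness), and with `q = p_{Y*}` applied to each
`p_{Xᵢ}` for the second (concavity of `I` in the input distribution).
-/

open Finset Real

lemma sub_le_mul_log_div {a c : ℝ} (ha : 0 ≤ a) (hc : 0 ≤ c) (hac : c = 0 → a = 0) :
    a - c ≤ a * log (a / c) := by
  rcases ha.eq_or_lt with rfl | ha
  · simpa using hc
  have hc : 0 < c := hc.lt_of_ne fun h => ha.ne' (hac h.symm)
  calc a - c = a * (1 - (a / c)⁻¹) := by field_simp
    _ ≤ a * log (a / c) := by gcongr; exact one_sub_inv_le_log_of_pos (div_pos ha hc)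

lemma sum_mul_log_div_nonneg {β : Type} [Fintype β] {a c : β → ℝ} (ha : ∀ y, 0 ≤ a y)
    (hc : ∀ y, 0 ≤ c y) (hac : ∀ y, c y = 0 → a y = 0) (hsum : ∑ y, c y ≤ ∑ y, a y) :
    0 ≤ ∑ y, a y * log (a y / c y) :=
  calc 0 ≤ ∑ y, (a y - c y) := by rw [sum_sub_distrib]; linarith
    _ ≤ _ := sum_le_sum fun y _ => sub_le_mul_log_div (ha y) (hc y) (hac y)

lemma IsProbVec.prod {ι β : Type} [Fintype ι] [DecidableEq ι] [Fintype β] {q : ι → β → ℝ}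
    (hq : ∀ i, IsProbVec (q i)) : IsProbVec fun y : ι → β => ∏ i, q i (y i) := by
  refine ⟨fun y => prod_nonneg fun i _ => (hq i).1 (y i), ?_⟩
  rw [← Fintype.prod_sum q]
  exact prod_eq_one fun i _ => (hq i).2

lemma sum_prod_mul_apply {ι β : Type} [Fintype ι] [DecidableEq ι] [Fintype β] {q : ι → β → ℝ}
    (hq : ∀ i, ∑ y, q i y = 1) (i : ι) (g : β → ℝ) :
    ∑ y : ι → β, (∏ j, q j (y j)) * g (y i) = ∑ z, q i z * g z := by
  have factor (y : ι → β) :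
      (∏ j, q j (y j)) * g (y i) = ∏ j, q j (y j) * if j = i then g (y j) else 1 := by
    rw [prod_mul_distrib]
    simp
  simp_rw [factor, ← Fintype.prod_sum fun j z => q j z * if j = i then g z else 1]
  rw [prod_eq_single i]
  · simp
  · intro j _ hj
    simpa [hj] using hq j
  · simp

section Channel

variable {α β : Type} [Fintype α] {p : α → ℝ} {W : α → β → ℝ}

lemma outEnergy_eq_sum_mul_sum [Fintype β] (b : β → ℝ) :
    outEnergy p W b = ∑ x, p x * ∑ y, W x y * b y := by
  unfold outEnergy outDist
  simp_rw [sum_mul, mul_sum, mul_assoc]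
  exact sum_comm

lemma mul_le_outDist [Fintype β] (hp : ∀ x, 0 ≤ p x) (hW : IsChannel W) (x : α) (y : β) :
    p x * W x y ≤ outDist p W y :=
  single_le_sum (f := fun x => p x * W x y) (fun x _ => mul_nonneg (hp x) ((hW x).1 y))
    (mem_univ x)

lemma IsProbVec.outDist [Fintype β] (hp : IsProbVec p) (hW : IsChannel W) :
    IsProbVec (outDist p W) := by
  refine ⟨fun y => sum_nonneg fun x _ => mul_nonneg (hp.1 x) ((hW x).1 y), ?_⟩
  unfold _root_.outDist
  rw [sum_comm, ← hp.2]
  exact sum_congr rfl fun x _ => by rw [← mul_sum, (hW x).2, mul_one]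

/-- The gap is the divergence `D(p_Y ‖ q)`. -/
lemma mutInfo_le_sum_mul_log_div [Fintype β] (hp : IsProbVec p) (hW : IsChannel W) {q : β → ℝ}
    (hq : IsProbVec q) (hdom : ∀ y, q y = 0 → outDist p W y = 0) :
    mutInfo p W ≤ ∑ x, ∑ y, p x * W x y * log (W x y / q y) := by
  have hr := hp.outDist hW
  have change_reference (x : α) (y : β) :
      p x * W x y * log (W x y / q y) - p x * W x y * log (W x y / outDist p W y)
        = p x * W x y * log (outDist p W y / q y) := by
    rcases (mul_nonneg (hp.1 x) ((hW x).1 y)).eq_or_lt with h | h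
    · simp [← h]
    have hWxy : 0 < W x y := pos_of_mul_pos_right h (hp.1 x)
    have hry : 0 < outDist p W y := h.trans_le (mul_le_outDist hp.1 hW x y)
    have hqy : 0 < q y := (hq.1 y).lt_of_ne fun h0 => hry.ne' (hdom y h0.symm)
    rw [log_div hWxy.ne' hqy.ne', log_div hWxy.ne' hry.ne', log_div hry.ne' hqy.ne']
    ring
  have gap : ∑ x, ∑ y, p x * W x y * log (W x y / q y) - mutInfo p W
      = ∑ y, outDist p W y * log (outDist p W y / q y) := by
    unfold mutInfo
    simp_rw [← sum_sub_distrib, change_reference]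
    rw [sum_comm]
    simp_rw [← sum_mul]
    rfl
  linarith [sum_mul_log_div_nonneg hr.1 hq.1 hdom (by rw [hr.2, hq.2])]

lemma outDist_mix {ι : Type} [Fintype ι] (w : ι → ℝ) (P : ι → α → ℝ) (y : β) :
    outDist (fun x => ∑ i, w i * P i x) W y = ∑ i, w i * outDist (P i) W y := by
  unfold _root_.outDist
  simp_rw [sum_mul, mul_sum, mul_assoc]
  exact sum_comm

lemma IsProbVec.mix {ι : Type} [Fintype ι] {w : ι → ℝ} (hw : IsProbVec w) {P : ι → α → ℝ}
    (hP : ∀ i, IsProbVec (P i)) : IsProbVec fun x => ∑ i, w i * P i x := by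
  refine ⟨fun x => sum_nonneg fun i _ => mul_nonneg (hw.1 i) ((hP i).1 x), ?_⟩
  rw [sum_comm, ← hw.2]
  exact sum_congr rfl fun i _ => by rw [← mul_sum, (hP i).2, mul_one]

lemma sum_mul_mutInfo_le_mutInfo_mix [Fintype β] {ι : Type} [Fintype ι] {w : ι → ℝ}
    (hw : IsProbVec w) {P : ι → α → ℝ} (hP : ∀ i, IsProbVec (P i)) (hW : IsChannel W) :
    ∑ i, w i * mutInfo (P i) W ≤ mutInfo (fun x => ∑ i, w i * P i x) W := by
  set r := outDist (fun x => ∑ i, w i * P i x) W with hr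
  have hdom (i : ι) (hwi : 0 < w i) (y : β) (hy : r y = 0) : outDist (P i) W y = 0 := by
    rw [hr, outDist_mix] at hy
    have := (sum_eq_zero_iff_of_nonneg fun j _ =>
      mul_nonneg (hw.1 j) (((hP j).outDist hW).1 y)).1 hy i (mem_univ i)
    exact (mul_eq_zero.1 this).resolve_left hwi.ne'
  calc ∑ i, w i * mutInfo (P i) W
      ≤ ∑ i, w i * ∑ x, ∑ y, P i x * W x y * log (W x y / r y) := by
        refine sum_le_sum fun i _ => ?_
        rcases (hw.1 i).eq_or_lt with h | h
        · simp [← h]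
        exact mul_le_mul_of_nonneg_left (mutInfo_le_sum_mul_log_div (hP i) hW
          ((hw.mix hP).outDist hW) (hdom i h)) h.le
    _ = mutInfo (fun x => ∑ i, w i * P i x) W := by
        unfold mutInfo
        simp_rw [mul_sum, sum_mul]
        rw [sum_comm]
        refine sum_congr rfl fun x _ => ?_
        rw [sum_comm]
        exact sum_congr rfl fun y _ => sum_congr rfl fun i _ => by ring

end Channel

section Memoryless

variable {α β : Type} [Fintype β] {W : α → β → ℝ} {n : ℕ}

lemma IsChannel.nCh (hW : IsChannel W) (n : ℕ) : IsChannel (nCh W n) :=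
  fun x => IsProbVec.prod fun i => hW (x i)

lemma sum_nCh_mul_apply (hW : IsChannel W) (x : Fin n → α) (i : Fin n) (g : β → ℝ) :
    ∑ y, nCh W n x y * g (y i) = ∑ z, W (x i) z * g z :=
  sum_prod_mul_apply (fun j => (hW (x j)).2) i g

end Memoryless

section Marginals

variable {𝓧 : Type} [Fintype 𝓧] [DecidableEq 𝓧] {n : ℕ}

lemma sum_marg_mul (p : (Fin n → 𝓧) → ℝ) (i : Fin n) (g : 𝓧 → ℝ) :
    ∑ x, marg p i x * g x = ∑ xv, p xv * g (xv i) := by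
  simp_rw [marg, sum_mul, ite_mul, zero_mul]
  rw [sum_comm]
  simp

lemma le_marg {p : (Fin n → 𝓧) → ℝ} (hp : ∀ xv, 0 ≤ p xv) (i : Fin n) (xv : Fin n → 𝓧) :
    p xv ≤ marg p i (xv i) := by
  simpa [marg] using single_le_sum (f := fun v : Fin n → 𝓧 => if v i = xv i then p v else 0)
    (fun v _ => by split_ifs <;> simp [hp v]) (mem_univ xv)

lemma IsProbVec.marg {p : (Fin n → 𝓧) → ℝ} (hp : IsProbVec p) (i : Fin n) :
    IsProbVec (marg p i) := by
  refine ⟨fun x => sum_nonneg fun xv _ => by split_ifs <;> simp [hp.1 xv], ?_⟩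
  simpa [hp.2] using sum_marg_mul p i fun _ => 1

lemma avgMarg_eq_mix (p : (Fin n → 𝓧) → ℝ) :
    avgMarg p = fun x => ∑ i, (n : ℝ)⁻¹ * marg p i x :=
  funext fun _ => mul_sum _ _ _

end Marginals

section Letterization

variable {𝓧 β : Type} [Fintype 𝓧] [DecidableEq 𝓧] [Fintype β] {W : 𝓧 → β → ℝ} {n : ℕ}
  {p : (Fin n → 𝓧) → ℝ}

lemma outEnergy_avgMarg (hW : IsChannel W) (b : β → ℝ) :
    outEnergy (avgMarg p) W b = (n : ℝ)⁻¹ * outEnergy p (nCh W n) (blockE b) := by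
  have block_energy (xv : Fin n → 𝓧) :
      ∑ yv, nCh W n xv yv * blockE b yv = ∑ i, ∑ z, W (xv i) z * b z := by
    simp_rw [blockE, mul_sum]
    rw [sum_comm]
    exact sum_congr rfl fun i _ => sum_nCh_mul_apply hW xv i b
  rw [outEnergy_eq_sum_mul_sum, outEnergy_eq_sum_mul_sum]
  simp_rw [block_energy, avgMarg, mul_assoc, ← mul_sum]
  congr 1
  calc ∑ x, (∑ i, marg p i x) * ∑ z, W x z * b z
      = ∑ i, ∑ x, marg p i x * ∑ z, W x z * b z := by simp_rw [sum_mul]; exact sum_comm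
    _ = ∑ xv, p xv * ∑ i, ∑ z, W (xv i) z * b z := by
        simp_rw [sum_marg_mul, mul_sum]; exact sum_comm

lemma outDist_marg_pos (hp : IsProbVec p) (hW : IsChannel W) {xv : Fin n → 𝓧}
    {yv : Fin n → β} (h : 0 < p xv * nCh W n xv yv) (i : Fin n) :
    0 < outDist (marg p i) W (yv i) := by
  have hpx : 0 < p xv := pos_of_mul_pos_left h ((hW.nCh n xv).1 yv)
  have hWi : W (xv i) (yv i) ≠ 0 :=
    prod_ne_zero_iff.1 (pos_of_mul_pos_right h (hp.1 xv)).ne' i (mem_univ i)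
  refine lt_of_lt_of_le ?_ (mul_le_outDist (hp.marg i).1 hW (xv i) (yv i))
  exact mul_pos (hpx.trans_le (le_marg hp.1 i xv)) (((hW (xv i)).1 (yv i)).lt_of_ne hWi.symm)

lemma mutInfo_marg_eq (hW : IsChannel W) (i : Fin n) :
    mutInfo (marg p i) W = ∑ xv, ∑ yv, p xv * nCh W n xv yv *
      log (W (xv i) (yv i) / outDist (marg p i) W (yv i)) := by
  simp_rw [mutInfo, mul_assoc, ← mul_sum, sum_marg_mul]
  refine sum_congr rfl fun xv _ => ?_
  rw [← sum_nCh_mul_apply hW xv i fun y => log (W (xv i) y / outDist (marg p i) W y), mul_sum]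

lemma mutInfo_nCh_le_sum_mutInfo_marg (hp : IsProbVec p) (hW : IsChannel W) :
    mutInfo p (nCh W n) ≤ ∑ i, mutInfo (marg p i) W := by
  set q : (Fin n → β) → ℝ := fun yv => ∏ i, outDist (marg p i) W (yv i)
  have hq : IsProbVec q := IsProbVec.prod fun i => (hp.marg i).outDist hW
  have hdom (yv : Fin n → β) (hyv : q yv = 0) : outDist p (nCh W n) yv = 0 :=
    sum_eq_zero fun xv _ => by
      by_contra h
      have hpos := (mul_nonneg (hp.1 xv) ((hW.nCh n xv).1 yv)).lt_of_ne' h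
      exact (prod_pos fun i _ => outDist_marg_pos hp hW hpos i).ne' hyv
  have log_split (xv : Fin n → 𝓧) (yv : Fin n → β) :
      p xv * nCh W n xv yv * log (nCh W n xv yv / q yv)
        = ∑ i, p xv * nCh W n xv yv * log (W (xv i) (yv i) / outDist (marg p i) W (yv i)) := by
    rcases (mul_nonneg (hp.1 xv) ((hW.nCh n xv).1 yv)).eq_or_lt with h | h
    · simp [← h]
    have hW0 := prod_ne_zero_iff.1 (pos_of_mul_pos_right h (hp.1 xv)).ne'
    rw [← mul_sum, nCh, ← prod_div_distrib, log_prod fun i _ =>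
      div_ne_zero (hW0 i (mem_univ i)) (outDist_marg_pos hp hW h i).ne']
  calc mutInfo p (nCh W n)
      ≤ ∑ xv, ∑ yv, p xv * nCh W n xv yv * log (nCh W n xv yv / q yv) :=
        mutInfo_le_sum_mul_log_div hp (hW.nCh n) hq hdom
    _ = ∑ i, mutInfo (marg p i) W := by
        simp_rw [log_split, mutInfo_marg_eq hW]
        exact (sum_congr rfl fun xv _ => sum_comm).trans sum_comm

lemma sum_mutInfo_marg_le_mul_mutInfo_avgMarg (hn : 0 < n) (hp : IsProbVec p)
    (hW : IsChannel W) : ∑ i, mutInfo (marg p i) W ≤ n * mutInfo (avgMarg p) W := by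
  have hn' : (0 : ℝ) < n := Nat.cast_pos.2 hn
  have uniform : IsProbVec fun _ : Fin n => (n : ℝ)⁻¹ :=
    ⟨fun _ => inv_nonneg.2 hn'.le, by simp [hn'.ne']⟩
  have := sum_mul_mutInfo_le_mutInfo_mix uniform hp.marg hW
  rwa [← mul_sum, ← avgMarg_eq_mix, inv_mul_le_iff₀ hn'] at this

end Letterization

theorem avgMarg_energy_and_mutInfo_general
    {𝓧 : Type} [Fintype 𝓧] [DecidableEq 𝓧] {L : ℕ}
    {𝓨 : Fin L → Type} [∀ ℓ, Fintype (𝓨 ℓ)]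
    (W : ∀ ℓ, 𝓧 → 𝓨 ℓ → ℝ) (hW : ∀ ℓ, IsChannel (W ℓ))
    (b : ∀ ℓ, 𝓨 ℓ → ℝ)
    (n : ℕ) (hn : 0 < n) (B : Fin L → ℝ)
    (p : (Fin n → 𝓧) → ℝ) (hp : IsProbVec p) :
    (∀ ℓ, outEnergy (avgMarg p) (W ℓ) (b ℓ)
        = (n : ℝ)⁻¹ * outEnergy p (nCh (W ℓ) n) (blockE (b ℓ))) ∧
    ((∀ ℓ, (n : ℝ) * B ℓ ≤ outEnergy p (nCh (W ℓ) n) (blockE (b ℓ))) →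
      ∀ ℓ, B ℓ ≤ outEnergy (avgMarg p) (W ℓ) (b ℓ)) ∧
    (⨅ ℓ, mutInfo p (nCh (W ℓ) n)) ≤ n * ⨅ ℓ, mutInfo (avgMarg p) (W ℓ) := by
  have hn' : (0 : ℝ) < n := Nat.cast_pos.2 hn
  have energy (ℓ : Fin L) := outEnergy_avgMarg (p := p) (hW ℓ) (b ℓ)
  refine ⟨energy, fun admissible ℓ => ?_, ?_⟩
  · rw [energy ℓ, le_inv_mul_iff₀ hn']
    exact admissible ℓ
  · have per_receiver (ℓ : Fin L) :
        mutInfo p (nCh (W ℓ) n) ≤ n * mutInfo (avgMarg p) (W ℓ) :=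
      (mutInfo_nCh_le_sum_mutInfo_marg hp (hW ℓ)).trans
        (sum_mutInfo_marg_le_mul_mutInfo_avgMarg hn hp (hW ℓ))
    rw [Real.mul_iInf_of_nonneg hn'.le]
    exact ciInf_mono (Finite.bddBelow_range _) per_receiver

/-- **The averaged single-letter input inherits the energy constraints and dominates
the normalized multi-letter mutual information.** For any `n`-letter input `X₁ⁿ` with
`X* ~ (1/n) Σᵢ p_{Xᵢ}`:
(i) `E[b_ℓ(Y*(ℓ))] = (1/n)·E[b_ℓ(Y(ℓ)₁ⁿ)]` for every `ℓ`, so `B⃗`-admissibility of `X₁ⁿ`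
gives `E[b_ℓ(Y*(ℓ))] ≥ B_ℓ`; and
(ii) `min_ℓ I(X₁ⁿ; Y(ℓ)₁ⁿ) ≤ n · min_ℓ I(X*; Y*(ℓ))`. -/
theorem avgMarg_energy_and_mutInfo
    {𝓧 : Type} [Fintype 𝓧] [DecidableEq 𝓧] {L : ℕ} (hL : 0 < L)
    {𝓨 : Fin L → Type} [∀ ℓ, Fintype (𝓨 ℓ)]
    (W : ∀ ℓ, 𝓧 → 𝓨 ℓ → ℝ) (hW : ∀ ℓ, IsChannel (W ℓ))
    (b : ∀ ℓ, 𝓨 ℓ → ℝ) (hb : ∀ ℓ y, 0 ≤ b ℓ y)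
    (n : ℕ) (hn : 0 < n) (B : Fin L → ℝ)
    (p : (Fin n → 𝓧) → ℝ) (hp : IsProbVec p) :
    (∀ ℓ, outEnergy (avgMarg p) (W ℓ) (b ℓ)
        = (n : ℝ)⁻¹ * outEnergy p (nCh (W ℓ) n) (blockE (b ℓ))) ∧
    ((∀ ℓ, (n : ℝ) * B ℓ ≤ outEnergy p (nCh (W ℓ) n) (blockE (b ℓ))) →
      ∀ ℓ, B ℓ ≤ outEnergy (avgMarg p) (W ℓ) (b ℓ)) ∧
    (⨅ ℓ, mutInfo p (nCh (W ℓ) n)) ≤ n * ⨅ ℓ, mutInfo (avgMarg p) (W ℓ) :=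
  avgMarg_energy_and_mutInfo_general W hW b n hn B p hp
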